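/- Let λ̂₁ > λ̂₂ > λ̂₃ > λ̂₄ be reals with λ̂₁+λ̂₂+λ̂₃+λ̂₄ = 0, and set c₃ = 2(λ̂₁+λ̂₂), c₂ = 2(λ̂₁+λ̂₃), c₁ = 2|λ̂₁+λ̂₄|. Then for every x ∈ [0, c₂], ∫_{0}^{∞} x·y·( −p(x−c₂, y−c₃) + p(x−c₂, y−c₁) + p(x−c₂, y+c₁) ) dy = ((c₁² − c₃²)/64) · x · (x − c₂)², and for every x ≥ c₂ the same integral equals 0. -/

import Mathlib

open MeasureTheory

/-- The piecewise-polynomial density `p(r,s)`. -/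
noncomputable def pDen (r s : ℝ) : ℝ :=
  if 0 ≤ s ∧ s ≤ -r then (r + s) ^ 2 / 64
  else if r ≤ s ∧ s ≤ 0 then (r ^ 2 + 2 * r * s - s ^ 2) / 64
  else if s ≤ r ∧ r ≤ 0 then r ^ 2 / 32
  else 0

/-!
Put `r = x - c₂`. For `x ≥ c₂` the density `p(r, ·)` vanishes identically. For `x ≤ c₂`, the
substitution `s = y - c` turns `∫₀^∞ y p(r, y - c) dy` into `∫ (s + c) p(r, s) ds` over `s ≥ -c`,
the integral of a cubic on each of the pieces cut out by `r ≤ 0 ≤ -r`. This moment equals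
`r²c²/64 + r⁴/384` when `c ≥ -r` (the case `c = c₃`), and for every `c ≥ 0` the same value is
the sum of the moments at `c` and `-c` (the case `c = c₁`). The `r⁴` terms cancel in the
combination, leaving `(c₁² - c₃²) r² / 64`.
-/

theorem pDen_eq_zero_of_nonneg {r : ℝ} (hr : 0 ≤ r) (s : ℝ) : pDen r s = 0 := by
  unfold pDen
  split_ifs <;> nlinarith

theorem pDen_eq_clamp {r : ℝ} (hr : r ≤ 0) (s : ℝ) :
    pDen r s =
      (r ^ 2 + 2 * r * max r (min s (-r)) + max r (min s (-r)) * |max r (min s (-r))|) / 64 := by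
  unfold pDen
  split_ifs with h₁ h₂ h₃
  · rw [min_eq_left h₁.2, max_eq_right (hr.trans h₁.1), abs_of_nonneg h₁.1]; ring
  · rw [min_eq_left (h₂.2.trans (neg_nonneg.2 hr)), max_eq_right h₂.1, abs_of_nonpos h₂.2]; ring
  · rw [min_eq_left (h₃.1.trans (hr.trans (neg_nonneg.2 hr))), max_eq_left h₃.1, abs_of_nonpos hr]
    ring
  · have hs : -r < s := by
      by_contra! h
      rcases le_total 0 s with h0 | h0
      · exact h₁ ⟨h0, h⟩
      · rcases le_total r s with h' | h'
        · exact h₂ ⟨h', h0⟩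
        · exact h₃ ⟨h', hr⟩
    rw [min_eq_right hs.le, max_eq_right (by linarith), abs_of_nonneg (by linarith)]; ring

theorem continuous_pDen {r : ℝ} (hr : r ≤ 0) : Continuous (pDen r) := by
  rw [funext (pDen_eq_clamp hr)]
  fun_prop

theorem pDen_of_le {r s : ℝ} (hr : r ≤ 0) (hs : s ≤ r) : pDen r s = r ^ 2 / 32 := by
  rw [pDen_eq_clamp hr, min_eq_left (hs.trans (hr.trans (neg_nonneg.2 hr))), max_eq_left hs,
    abs_of_nonpos hr]
  ring

theorem pDen_of_le_of_nonpos {r s : ℝ} (hs : r ≤ s) (hs₀ : s ≤ 0) :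
    pDen r s = (r ^ 2 + 2 * r * s - s ^ 2) / 64 := by
  rw [pDen_eq_clamp (hs.trans hs₀), min_eq_left (hs₀.trans (by linarith)), max_eq_right hs,
    abs_of_nonpos hs₀]
  ring

theorem pDen_of_nonneg_of_le_neg {r s : ℝ} (hs₀ : 0 ≤ s) (hs : s ≤ -r) :
    pDen r s = (r + s) ^ 2 / 64 := by
  rw [pDen, if_pos ⟨hs₀, hs⟩]

theorem pDen_of_neg_le {r s : ℝ} (hs : -r ≤ s) : pDen r s = 0 := by
  rcases le_total r 0 with hr | hr
  · rw [pDen_eq_clamp hr, min_eq_right hs, max_eq_right (by linarith), abs_of_nonneg (by linarith)]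
    ring
  · exact pDen_eq_zero_of_nonneg hr s

theorem integral_eq_of_eqOn_cubic {f : ℝ → ℝ} {u v : ℝ} (A B C D : ℝ) (huv : u ≤ v)
    (hf : ∀ s ∈ Set.Icc u v, f s = A * s ^ 3 + B * s ^ 2 + C * s + D) :
    ∫ s in u..v, f s =
      A * (v ^ 4 - u ^ 4) / 4 + B * (v ^ 3 - u ^ 3) / 3 + C * (v ^ 2 - u ^ 2) / 2 +
        D * (v - u) := by
  have hF (s : ℝ) : HasDerivAt (fun s => A * s ^ 4 / 4 + B * s ^ 3 / 3 + C * s ^ 2 / 2 + D * s)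
      (A * s ^ 3 + B * s ^ 2 + C * s + D) s :=
    ((((((hasDerivAt_pow 4 s).const_mul A).div_const 4).add
      (((hasDerivAt_pow 3 s).const_mul B).div_const 3)).add
      (((hasDerivAt_pow 2 s).const_mul C).div_const 2)).add
      ((hasDerivAt_id s).const_mul D)).congr_deriv (by norm_num; ring)
  rw [intervalIntegral.integral_congr (Set.uIcc_of_le huv ▸ hf),
    intervalIntegral.integral_eq_sub_of_hasDerivAt (fun s _ => hF s)
      (Continuous.intervalIntegrable (by fun_prop) _ _)]
  ring

section Pieces

variable {r : ℝ} (c : ℝ)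

theorem integral_mul_pDen_of_le (hr : r ≤ 0) {u : ℝ} (hu : u ≤ r) :
    ∫ s in u..r, (s + c) * pDen r s = r ^ 2 / 32 * ((r ^ 2 - u ^ 2) / 2 + c * (r - u)) := by
  rw [integral_eq_of_eqOn_cubic 0 0 (r ^ 2 / 32) (c * r ^ 2 / 32) hu fun s hs => by
    rw [pDen_of_le hr hs.2]; ring]
  ring

theorem integral_mul_pDen_of_le_of_nonpos {u : ℝ} (hu : r ≤ u) (hu₀ : u ≤ 0) :
    ∫ s in u..0, (s + c) * pDen r s =
      (u ^ 4 / 4 - (2 * r - c) * u ^ 3 / 3 - (r ^ 2 + 2 * r * c) * u ^ 2 / 2 - c * r ^ 2 * u) /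
        64 := by
  rw [integral_eq_of_eqOn_cubic (-1 / 64) ((2 * r - c) / 64) ((r ^ 2 + 2 * r * c) / 64)
    (c * r ^ 2 / 64) hu₀ fun s hs => by rw [pDen_of_le_of_nonpos (hu.trans hs.1) hs.2]; ring]
  ring

theorem integral_mul_pDen_of_nonneg_of_le_neg {u : ℝ} (hu₀ : 0 ≤ u) (hu : u ≤ -r) :
    ∫ s in u..-r, (s + c) * pDen r s = -((u + r) ^ 4 / 4 + (c - r) * (u + r) ^ 3 / 3) / 64 := by
  rw [integral_eq_of_eqOn_cubic (1 / 64) ((2 * r + c) / 64) ((r ^ 2 + 2 * r * c) / 64)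
    (c * r ^ 2 / 64) hu fun s hs => by rw [pDen_of_nonneg_of_le_neg (hu₀.trans hs.1) hs.2]; ring]
  ring

theorem integral_mul_pDen_of_neg_le {u v : ℝ} (hu : -r ≤ u) (hv : -r ≤ v) :
    ∫ s in u..v, (s + c) * pDen r s = 0 := by
  rw [intervalIntegral.integral_congr (g := fun _ => 0) fun s hs => ?_,
    intervalIntegral.integral_zero]
  rw [pDen_of_neg_le ((le_min hu hv).trans hs.1), mul_zero]

end Pieces

theorem integral_mul_pDen_sub (r c M : ℝ) :
    ∫ y in 0..M, y * pDen r (y - c) = ∫ s in -c..M - c, (s + c) * pDen r s := by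
  simpa only [sub_add_cancel, zero_sub] using
    intervalIntegral.integral_comp_sub_right (fun s => (s + c) * pDen r s) c (a := 0) (b := M)

theorem intervalIntegrable_mul_pDen {r : ℝ} (hr : r ≤ 0) (c u v : ℝ) :
    IntervalIntegrable (fun s => (s + c) * pDen r s) volume u v :=
  ((continuous_add_const c).mul (continuous_pDen hr)).intervalIntegrable u v

theorem integral_mul_pDen_sub_of_neg_le {r c M : ℝ} (hr : r ≤ 0) (hc : -r ≤ c) (hM : c - r ≤ M) :
    ∫ y in 0..M, y * pDen r (y - c) = r ^ 2 * c ^ 2 / 64 + r ^ 4 / 384 := by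
  have hi := intervalIntegrable_mul_pDen hr c
  rw [integral_mul_pDen_sub, ← intervalIntegral.integral_add_adjacent_intervals (hi _ r) (hi r _),
    ← intervalIntegral.integral_add_adjacent_intervals (hi r 0) (hi 0 _),
    ← intervalIntegral.integral_add_adjacent_intervals (hi 0 (-r)) (hi (-r) _),
    integral_mul_pDen_of_le c hr (by linarith), integral_mul_pDen_of_le_of_nonpos c le_rfl hr,
    integral_mul_pDen_of_nonneg_of_le_neg c le_rfl (by linarith),
    integral_mul_pDen_of_neg_le c le_rfl (by linarith)]
  ring

theorem integral_mul_pDen_sub_add_integral_mul_pDen_add {r c M : ℝ} (hr : r ≤ 0) (hc : 0 ≤ c)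
    (hM : c - r ≤ M) :
    (∫ y in 0..M, y * pDen r (y - c)) + ∫ y in 0..M, y * pDen r (y + c) =
      r ^ 2 * c ^ 2 / 64 + r ^ 4 / 384 := by
  have hadd : ∫ y in 0..M, y * pDen r (y + c) = ∫ s in c..M + c, (s + -c) * pDen r s := by
    simpa only [sub_neg_eq_add, neg_neg] using integral_mul_pDen_sub r (-c) M
  rcases le_total (-r) c with hrc | hcr
  · rw [integral_mul_pDen_sub_of_neg_le hr hrc hM, hadd,
      integral_mul_pDen_of_neg_le _ hrc (by linarith), add_zero]
  have hi := intervalIntegrable_mul_pDen hr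
  rw [hadd, integral_mul_pDen_sub,
    ← intervalIntegral.integral_add_adjacent_intervals (hi c _ 0) (hi c 0 _),
    ← intervalIntegral.integral_add_adjacent_intervals (hi c 0 (-r)) (hi c (-r) _),
    ← intervalIntegral.integral_add_adjacent_intervals (hi (-c) c (-r)) (hi (-c) (-r) _),
    integral_mul_pDen_of_le_of_nonpos c (by linarith) (by linarith),
    integral_mul_pDen_of_nonneg_of_le_neg c le_rfl (by linarith),
    integral_mul_pDen_of_neg_le c le_rfl (by linarith),
    integral_mul_pDen_of_nonneg_of_le_neg (-c) hc hcr,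
    integral_mul_pDen_of_neg_le (-c) le_rfl (by linarith)]
  ring

theorem integral_Ici_eq_intervalIntegral {f : ℝ → ℝ} {a b : ℝ} (hab : a ≤ b)
    (hf : ∀ y, b < y → f y = 0) : ∫ y in Set.Ici a, f y = ∫ y in a..b, f y := by
  rw [intervalIntegral.integral_of_le hab, ← integral_Icc_eq_integral_Ioc]
  exact setIntegral_eq_of_subset_of_forall_sdiff_eq_zero measurableSet_Ici Set.Icc_subset_Ici_self
    fun y hy => hf y (lt_of_not_ge fun h => hy.2 ⟨hy.1, h⟩)

theorem integral_I2 (l1 l2 l3 l4 : ℝ) (h12 : l2 < l1) (h23 : l3 < l2) (h34 : l4 < l3)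
    (hsum : l1 + l2 + l3 + l4 = 0)
    (c1 c2 c3 : ℝ) (hc3 : c3 = 2 * (l1 + l2)) (hc2 : c2 = 2 * (l1 + l3))
    (hc1 : c1 = 2 * |l1 + l4|) :
    (∀ x : ℝ, 0 ≤ x → x ≤ c2 →
      (∫ y in Set.Ici (0 : ℝ), x * y * (-pDen (x - c2) (y - c3) + pDen (x - c2) (y - c1) + pDen (x - c2) (y + c1)))
        = (c1 ^ 2 - c3 ^ 2) / 64 * x * (x - c2) ^ 2) ∧
    (∀ x : ℝ, c2 ≤ x →
      (∫ y in Set.Ici (0 : ℝ), x * y * (-pDen (x - c2) (y - c3) + pDen (x - c2) (y - c1) + pDen (x - c2) (y + c1)))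
        = 0) := by
  have hc1₀ : 0 ≤ c1 := hc1 ▸ by positivity
  have hc1c3 : c1 ≤ c3 := by
    rw [hc1, hc3]
    linarith [abs_le.2 (⟨by linarith, by linarith⟩ : -(l1 + l2) ≤ l1 + l4 ∧ l1 + l4 ≤ l1 + l2)]
  have hc2c3 : c2 < c3 := by rw [hc2, hc3]; linarith
  refine ⟨fun x hx₀ hxc2 => ?_, fun x hx => ?_⟩
  · have hr : x - c2 ≤ 0 := by linarith
    have hp := continuous_pDen hr
    rw [integral_Ici_eq_intervalIntegral (b := c3 - (x - c2)) (by linarith) fun y hy => by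
      rw [pDen_of_neg_le (by linarith), pDen_of_neg_le (by linarith), pDen_of_neg_le (by linarith)]
      ring]
    have hsplit : (fun y => x * y * (-pDen (x - c2) (y - c3) + pDen (x - c2) (y - c1)
        + pDen (x - c2) (y + c1))) = fun y => x * ((y * pDen (x - c2) (y - c1)
          + y * pDen (x - c2) (y + c1)) - y * pDen (x - c2) (y - c3)) := by
      funext y; ring
    rw [hsplit, intervalIntegral.integral_const_mul, intervalIntegral.integral_sub,
      intervalIntegral.integral_add,
      integral_mul_pDen_sub_add_integral_mul_pDen_add hr hc1₀ (by linarith),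
      integral_mul_pDen_sub_of_neg_le hr (by linarith) le_rfl]
    · ring
    all_goals exact Continuous.intervalIntegrable (by fun_prop) _ _
  · simp [pDen_eq_zero_of_nonneg (sub_nonneg.2 hx)]
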